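/- (Full-gradient norm controlled by block-gradient norms.) In the stochastic block coordinate ascent setting, for every t ≥ 1, E[‖∇f̂(x_t)‖²] ≤ L²·(β_t^max)²·(M_ρ² + σ²) + L·β_t^max·(2M_ρ² + σ²) + E[‖g_t^θ‖² + |g_t^y|²], where ∇f̂(x_t) denotes the full gradient of f̂ at x_t = (θ_t, y_t). -/

import Mathlib

open MeasureTheory Filter

noncomputable section

/-- The stochastic block coordinate ascent setting of the paper
"Mean-Variance Proximal Policy Gradient".

`H` is a real finite-dimensional inner product space; `f : H → ℝ → ℝ` is the
(curried) objective `f̂(θ, y)`, differentiable as a function on `H × ℝ`, bounded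
above with supremum `fStar`, and with `L`-Lipschitz gradient (stated blockwise,
which for the Euclidean (ℓ²) structure on `H × ℝ` is exactly
`‖∇f̂(x) − ∇f̂(x')‖ ≤ L‖x − x'‖`).

On the probability space `(Ω, μ)` with filtration `F`, the iterates
`x_t = (θ t, y t)` are generated by the cyclic updates
`y_{t+1} = y_t + βy_t · g̃y_t`, `θ_{t+1} = θ_t + βθ_t • g̃θ_t`, with deterministic
initial point `x1`; the exact block gradients are
`g^y_t = ∂_y f̂(θ_t, y_t)` and `g^θ_t = ∇_θ f̂(θ_t, y_{t+1})`, with estimation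
errors `Δ^y_t = g̃^y_t − g^y_t`, `Δ^θ_t = g̃^θ_t − g^θ_t`.

Assumption (A1): `E[‖x_t‖²] ≤ ρ²`; assumption (A2): `E[(Δ^y_t)²] ≤ σ²`,
`E[‖Δ^θ_t‖²] ≤ σ²`, `E[Δ^y_t | F_{t-1}] = 0` a.s. and
`‖E[Δ^θ_t | F_{t-1}]‖ ≤ A·β_t^max` a.s.  The various integrability fields record
that the expectations appearing in the theorems are well defined (finite). -/
structure BCA (H : Type) [NormedAddCommGroup H] [InnerProductSpace ℝ H]
    [FiniteDimensional ℝ H] (Ω : Type) [MeasurableSpace Ω] where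
  /-- the underlying probability measure -/
  μ : Measure Ω
  prob : IsProbabilityMeasure μ
  /-- the filtration `(F_t)_{t ≥ 0}` -/
  F : ℕ → MeasurableSpace Ω
  F_le : ∀ t, F t ≤ ‹MeasurableSpace Ω›
  F_mono : Monotone F
  /-- the objective function `f̂`, written curried: `f θ y = f̂(θ, y)` -/
  f : H → ℝ → ℝ
  /-- the supremum `f̂*` of `f̂` -/
  fStar : ℝ
  hfStar : IsLUB (Set.range fun p : H × ℝ => f p.1 p.2) fStar
  /-- the Lipschitz constant of the gradient -/
  L : ℝ
  L_pos : 0 < L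
  hdiff : Differentiable ℝ fun p : H × ℝ => f p.1 p.2
  /-- `L`-Lipschitz continuity of the full gradient of `f̂` in the ℓ² product
  structure, written blockwise via the partial gradients. -/
  hlip : ∀ (θ₁ θ₂ : H) (y₁ y₂ : ℝ),
    ‖gradient (fun a => f a y₁) θ₁ - gradient (fun a => f a y₂) θ₂‖ ^ 2
        + (deriv (f θ₁) y₁ - deriv (f θ₂) y₂) ^ 2
      ≤ L ^ 2 * (‖θ₁ - θ₂‖ ^ 2 + (y₁ - y₂) ^ 2)
  /-- the `θ`-iterates -/
  θ : ℕ → Ω → H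
  /-- the `y`-iterates -/
  y : ℕ → Ω → ℝ
  /-- deterministic stepsizes for `θ` -/
  βθ : ℕ → ℝ
  /-- deterministic stepsizes for `y` -/
  βy : ℕ → ℝ
  βθ_pos : ∀ t, 0 < βθ t
  βy_pos : ∀ t, 0 < βy t
  /-- the stochastic estimate `g̃^y_t` -/
  gty : ℕ → Ω → ℝ
  /-- the stochastic estimate `g̃^θ_t` -/
  gtθ : ℕ → Ω → H
  /-- the deterministic initial point `x₁ = (θ₁, y₁)` -/
  x1 : H × ℝ
  hx1 : ∀ ω, θ 1 ω = x1.1 ∧ y 1 ω = x1.2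
  update_y : ∀ t, 1 ≤ t → ∀ ω, y (t + 1) ω = y t ω + βy t * gty t ω
  update_θ : ∀ t, 1 ≤ t → ∀ ω, θ (t + 1) ω = θ t ω + βθ t • gtθ t ω
  meas_x : ∀ t, 1 ≤ t → StronglyMeasurable[F (t - 1)] fun ω => (θ t ω, y t ω)
  meas_gty : ∀ t, 1 ≤ t → StronglyMeasurable[F t] (gty t)
  meas_gtθ : ∀ t, 1 ≤ t → StronglyMeasurable[F t] (gtθ t)
  /-- the bound `ρ` of Assumption (A1) -/
  ρ : ℝ
  ρ_pos : 0 < ρ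
  /-- Assumption (A1): `E[‖x_t‖²] ≤ ρ²`. -/
  hA1 : ∀ t, 1 ≤ t → ∫ ω, (‖θ t ω‖ ^ 2 + (y t ω) ^ 2) ∂μ ≤ ρ ^ 2
  /-- the variance bound `σ` of Assumption (A2) -/
  σ : ℝ
  /-- the bias constant `A` of Assumption (A2) -/
  A : ℝ
  σ_nonneg : 0 ≤ σ
  A_nonneg : 0 ≤ A
  /-- (A2): `E[(Δ^y_t)²] ≤ σ²`. -/
  hA2y_var : ∀ t, 1 ≤ t →
    ∫ ω, (gty t ω - deriv (f (θ t ω)) (y t ω)) ^ 2 ∂μ ≤ σ ^ 2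
  /-- (A2): `E[‖Δ^θ_t‖²] ≤ σ²`. -/
  hA2θ_var : ∀ t, 1 ≤ t →
    ∫ ω, ‖gtθ t ω - gradient (fun a => f a (y (t + 1) ω)) (θ t ω)‖ ^ 2 ∂μ ≤ σ ^ 2
  /-- (A2): `E[Δ^y_t | F_{t-1}] = 0` a.s. -/
  hA2y_unbiased : ∀ t, 1 ≤ t →
    μ[(fun ω => gty t ω - deriv (f (θ t ω)) (y t ω)) | F (t - 1)] =ᵐ[μ] 0
  /-- (A2): `‖E[Δ^θ_t | F_{t-1}]‖ ≤ A · β_t^max` a.s. -/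
  hA2θ_bias : ∀ t, 1 ≤ t → ∀ᵐ ω ∂μ,
    ‖(μ[(fun ω' => gtθ t ω' - gradient (fun a => f a (y (t + 1) ω')) (θ t ω')) |
        F (t - 1)]) ω‖ ≤ A * max (βy t) (βθ t)
  -- integrability of the various expectations appearing in the statements
  int_f : ∀ t, 1 ≤ t → Integrable (fun ω => f (θ t ω) (y t ω)) μ
  int_x_sq : ∀ t, 1 ≤ t → Integrable (fun ω => ‖θ t ω‖ ^ 2 + (y t ω) ^ 2) μ
  int_gy_sq : ∀ t, 1 ≤ t →
    Integrable (fun ω => (deriv (f (θ t ω)) (y t ω)) ^ 2) μ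
  int_gθ_sq : ∀ t, 1 ≤ t →
    Integrable (fun ω => ‖gradient (fun a => f a (y (t + 1) ω)) (θ t ω)‖ ^ 2) μ
  int_Δy : ∀ t, 1 ≤ t →
    Integrable (fun ω => gty t ω - deriv (f (θ t ω)) (y t ω)) μ
  int_Δθ : ∀ t, 1 ≤ t →
    Integrable (fun ω => gtθ t ω - gradient (fun a => f a (y (t + 1) ω)) (θ t ω)) μ
  int_Δy_sq : ∀ t, 1 ≤ t →
    Integrable (fun ω => (gty t ω - deriv (f (θ t ω)) (y t ω)) ^ 2) μ
  int_Δθ_sq : ∀ t, 1 ≤ t →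
    Integrable (fun ω =>
      ‖gtθ t ω - gradient (fun a => f a (y (t + 1) ω)) (θ t ω)‖ ^ 2) μ
  int_fullgrad : ∀ t, 1 ≤ t →
    Integrable (fun ω => Real.sqrt (‖gradient (fun a => f a (y t ω)) (θ t ω)‖ ^ 2
      + (deriv (f (θ t ω)) (y t ω)) ^ 2)) μ
  int_fullgrad_sq : ∀ t, 1 ≤ t →
    Integrable (fun ω => ‖gradient (fun a => f a (y t ω)) (θ t ω)‖ ^ 2
      + (deriv (f (θ t ω)) (y t ω)) ^ 2) μ
  int_gθ_partial : ∀ t, 1 ≤ t →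
    Integrable (fun ω => ‖gradient (fun a => f a (y t ω)) (θ t ω)‖) μ
  int_gθ_norm : ∀ t, 1 ≤ t →
    Integrable (fun ω => ‖gradient (fun a => f a (y (t + 1) ω)) (θ t ω)‖) μ

namespace BCA

variable {H : Type} [NormedAddCommGroup H] [InnerProductSpace ℝ H]
  [FiniteDimensional ℝ H] {Ω : Type} [MeasurableSpace Ω]

/-- the exact block gradient `g^y_t = ∂_y f̂(θ_t, y_t)` -/
def gy (S : BCA H Ω) (t : ℕ) (ω : Ω) : ℝ := deriv (S.f (S.θ t ω)) (S.y t ω)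

/-- the exact block gradient `g^θ_t = ∇_θ f̂(θ_t, y_{t+1})` -/
def gθ (S : BCA H Ω) (t : ℕ) (ω : Ω) : H :=
  gradient (fun a => S.f a (S.y (t + 1) ω)) (S.θ t ω)

/-- `β_t^max` -/
def βmax (S : BCA H Ω) (t : ℕ) : ℝ := max (S.βy t) (S.βθ t)

/-- `β_t^min` -/
def βmin (S : BCA H Ω) (t : ℕ) : ℝ := min (S.βy t) (S.βθ t)

/-- `M_ρ = √(2L²ρ² + 2·max{‖∇_θ f̂(0)‖², ‖∇_y f̂(0)‖²})` -/
def Mρ (S : BCA H Ω) : ℝ :=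
  Real.sqrt (2 * S.L ^ 2 * S.ρ ^ 2
    + 2 * max (‖gradient (fun a => S.f a 0) 0‖ ^ 2) ((deriv (S.f 0) 0) ^ 2))

/-- the squared norm of the full gradient `‖∇f̂(x_t)‖²`
(for the ℓ² structure on `H × ℝ`), expressed blockwise. -/
def fullGradSq (S : BCA H Ω) (t : ℕ) (ω : Ω) : ℝ :=
  ‖gradient (fun a => S.f a (S.y t ω)) (S.θ t ω)‖ ^ 2
    + (deriv (S.f (S.θ t ω)) (S.y t ω)) ^ 2

end BCA

end

open MeasureTheory

/- Write `a = ∇_θ f̂(θ_t, y_t)` and `b = g^θ_t = ∇_θ f̂(θ_t, y_{t+1})`.  The two points differ only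
by the `y`-step `β^y_t g̃^y_t`, so Lipschitz continuity of the gradient gives
`‖a - b‖ ≤ L β^y_t |g̃^y_t|`, hence
`‖a‖² ≤ ‖b‖² + 2‖a‖‖a - b‖ ≤ ‖b‖² + L β^max_t (‖a‖² + (g̃^y_t)²)`.
Lipschitz continuity from the origin together with (A1) bounds `E‖a‖²` by `M_ρ²`, and since
`g^y_t` is `F_{t-1}`-measurable while `Δ^y_t` is conditionally centred,
`E[(g̃^y_t)²] = E[(g^y_t)²] + E[(Δ^y_t)²] ≤ M_ρ² + σ²`. -/

theorem sq_norm_le_sq_norm_add_two_mul_norm_mul_norm_sub {E : Type*} [SeminormedAddCommGroup E]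
    (a b : E) : ‖a‖ ^ 2 ≤ ‖b‖ ^ 2 + 2 * ‖a‖ * ‖a - b‖ := by
  have hb : ‖a‖ - ‖a - b‖ ≤ ‖b‖ := by simpa using norm_sub_norm_le a (a - b)
  rcases le_total ‖a - b‖ ‖a‖ with h | h
  · calc ‖a‖ ^ 2 ≤ (‖a‖ - ‖a - b‖) ^ 2 + 2 * ‖a‖ * ‖a - b‖ := by
          nlinarith [sq_nonneg ‖a - b‖]
      _ ≤ _ := by gcongr
  · nlinarith [norm_nonneg a, sq_nonneg ‖b‖]

theorem integral_mul_eq_zero_of_condExp_eq_zero {Ω : Type*} {m m₀ : MeasurableSpace Ω}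
    {μ : Measure Ω} [IsFiniteMeasure μ] (hm : m ≤ m₀) {g Δ : Ω → ℝ}
    (hg : StronglyMeasurable[m] g) (hgΔ : Integrable (g * Δ) μ) (hΔ : Integrable Δ μ)
    (hΔ₀ : μ[Δ | m] =ᵐ[μ] 0) : ∫ ω, g ω * Δ ω ∂μ = 0 := by
  have hpull : μ[g * Δ | m] =ᵐ[μ] 0 := by
    filter_upwards [condExp_mul_of_stronglyMeasurable_left hg hgΔ hΔ, hΔ₀] with ω h h₀
    simp [h, h₀]
  calc ∫ ω, g ω * Δ ω ∂μ = ∫ ω, (μ[g * Δ | m]) ω ∂μ := (integral_condExp hm).symm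
    _ = 0 := integral_eq_zero_of_ae hpull

namespace BCA

variable {H : Type} [NormedAddCommGroup H] [InnerProductSpace ℝ H] [FiniteDimensional ℝ H]
  {Ω : Type} [MeasurableSpace Ω] (S : BCA H Ω) {t : ℕ}

/-- `∇_θ f̂(x_t)`; note that `gθ t` evaluates the same gradient at `(θ_t, y_{t+1})`. -/
noncomputable def gradθ (t : ℕ) (ω : Ω) : H := gradient (fun a => S.f a (S.y t ω)) (S.θ t ω)

noncomputable def Δy (t : ℕ) (ω : Ω) : ℝ := S.gty t ω - S.gy t ω

noncomputable def gradSqAtZero : ℝ :=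
  max (‖gradient (fun a => S.f a 0) 0‖ ^ 2) ((deriv (S.f 0) 0) ^ 2)

theorem Mρ_sq : S.Mρ ^ 2 = 2 * S.L ^ 2 * S.ρ ^ 2 + 2 * S.gradSqAtZero :=
  Real.sq_sqrt (by positivity)

theorem sq_norm_gradient_le (θ : H) (y : ℝ) :
    ‖gradient (fun a => S.f a y) θ‖ ^ 2
      ≤ 2 * S.L ^ 2 * (‖θ‖ ^ 2 + y ^ 2) + 2 * S.gradSqAtZero := by
  have hlip := S.hlip θ 0 y 0
  simp only [sub_zero] at hlip
  calc ‖gradient (fun a => S.f a y) θ‖ ^ 2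
      ≤ (‖gradient (fun a => S.f a y) θ - gradient (fun a => S.f a 0) 0‖
          + ‖gradient (fun a => S.f a 0) 0‖) ^ 2 := by gcongr; exact norm_le_norm_sub_add _ _
    _ ≤ _ := add_sq_le
    _ ≤ _ := by
      have := le_max_left (‖gradient (fun a => S.f a 0) 0‖ ^ 2) ((deriv (S.f 0) 0) ^ 2)
      unfold gradSqAtZero
      nlinarith [sq_nonneg (deriv (S.f θ) y - deriv (S.f 0) 0)]

theorem sq_deriv_le (θ : H) (y : ℝ) :
    deriv (S.f θ) y ^ 2 ≤ 2 * S.L ^ 2 * (‖θ‖ ^ 2 + y ^ 2) + 2 * S.gradSqAtZero := by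
  have hlip := S.hlip θ 0 y 0
  simp only [sub_zero] at hlip
  calc deriv (S.f θ) y ^ 2 = (deriv (S.f θ) y - deriv (S.f 0) 0 + deriv (S.f 0) 0) ^ 2 := by ring
    _ ≤ _ := add_sq_le
    _ ≤ _ := by
      have := le_max_right (‖gradient (fun a => S.f a 0) 0‖ ^ 2) ((deriv (S.f 0) 0) ^ 2)
      unfold gradSqAtZero
      nlinarith [sq_nonneg ‖gradient (fun a => S.f a y) θ - gradient (fun a => S.f a 0) 0‖]

theorem integral_le_Mρ_sq (ht : 1 ≤ t) {φ : Ω → ℝ} (hφ : Integrable φ S.μ)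
    (hle : ∀ ω, φ ω ≤ 2 * S.L ^ 2 * (‖S.θ t ω‖ ^ 2 + S.y t ω ^ 2)
      + 2 * S.gradSqAtZero) :
    ∫ ω, φ ω ∂S.μ ≤ S.Mρ ^ 2 := by
  have := S.prob
  have hx := S.int_x_sq t ht
  calc ∫ ω, φ ω ∂S.μ
      ≤ ∫ ω, (2 * S.L ^ 2 * (‖S.θ t ω‖ ^ 2 + S.y t ω ^ 2)
          + 2 * S.gradSqAtZero) ∂S.μ :=
        integral_mono hφ ((hx.const_mul _).add (integrable_const _)) hle
    _ = 2 * S.L ^ 2 * ∫ ω, (‖S.θ t ω‖ ^ 2 + S.y t ω ^ 2) ∂S.μ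
          + 2 * S.gradSqAtZero := by
        rw [integral_add (hx.const_mul _) (integrable_const _), integral_const_mul,
          integral_const, probReal_univ, one_smul]
    _ ≤ S.Mρ ^ 2 := by
        rw [Mρ_sq]
        have := S.hA1 t ht
        gcongr

theorem integrable_sq_norm_gradθ (ht : 1 ≤ t) :
    Integrable (fun ω => ‖S.gradθ t ω‖ ^ 2) S.μ :=
  ((S.int_fullgrad_sq t ht).sub (S.int_gy_sq t ht)).congr
    (.of_forall fun _ => add_sub_cancel_right _ _)

theorem integral_sq_norm_gradθ_le (ht : 1 ≤ t) :
    ∫ ω, ‖S.gradθ t ω‖ ^ 2 ∂S.μ ≤ S.Mρ ^ 2 :=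
  S.integral_le_Mρ_sq ht (S.integrable_sq_norm_gradθ ht) fun _ => S.sq_norm_gradient_le _ _

theorem integral_sq_gy_le (ht : 1 ≤ t) : ∫ ω, S.gy t ω ^ 2 ∂S.μ ≤ S.Mρ ^ 2 :=
  S.integral_le_Mρ_sq ht (S.int_gy_sq t ht) fun _ => S.sq_deriv_le _ _

theorem stronglyMeasurable_gy (ht : 1 ≤ t) : StronglyMeasurable[S.F (t - 1)] (S.gy t) := by
  borelize H
  have hcont : Continuous (Function.uncurry S.f) := S.hdiff.continuous
  exact (stronglyMeasurable_deriv_with_param hcont).comp_measurable (S.meas_x t ht).measurable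

theorem integrable_gy_mul_Δy (ht : 1 ≤ t) : Integrable (S.gy t * S.Δy t) S.μ := by
  have hgy : AEStronglyMeasurable (S.gy t) S.μ :=
    ((S.stronglyMeasurable_gy ht).mono (S.F_le _)).aestronglyMeasurable
  have hΔy : AEStronglyMeasurable (S.Δy t) S.μ := (S.int_Δy t ht).aestronglyMeasurable
  exact ((memLp_two_iff_integrable_sq hgy).2 (S.int_gy_sq t ht)).integrable_mul
    ((memLp_two_iff_integrable_sq hΔy).2 (S.int_Δy_sq t ht))

theorem integral_gy_mul_Δy (ht : 1 ≤ t) : ∫ ω, S.gy t ω * S.Δy t ω ∂S.μ = 0 :=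
  have := S.prob
  integral_mul_eq_zero_of_condExp_eq_zero (S.F_le _) (S.stronglyMeasurable_gy ht)
    (S.integrable_gy_mul_Δy ht) (S.int_Δy t ht) (S.hA2y_unbiased t ht)

theorem sq_gty_eq (ω : Ω) :
    S.gty t ω ^ 2 = S.gy t ω ^ 2 + 2 * (S.gy t ω * S.Δy t ω) + S.Δy t ω ^ 2 := by
  unfold Δy; ring

theorem integrable_sq_gty (ht : 1 ≤ t) : Integrable (fun ω => S.gty t ω ^ 2) S.μ := by
  simp_rw [S.sq_gty_eq]
  exact ((S.int_gy_sq t ht).add ((S.integrable_gy_mul_Δy ht).const_mul 2)).add (S.int_Δy_sq t ht)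

theorem integral_sq_gty_le (ht : 1 ≤ t) :
    ∫ ω, S.gty t ω ^ 2 ∂S.μ ≤ S.Mρ ^ 2 + S.σ ^ 2 := by
  have hgy : Integrable (fun ω => S.gy t ω ^ 2) S.μ := S.int_gy_sq t ht
  have hcross : Integrable (fun ω => 2 * (S.gy t ω * S.Δy t ω)) S.μ :=
    (S.integrable_gy_mul_Δy ht).const_mul 2
  have hΔy : Integrable (fun ω => S.Δy t ω ^ 2) S.μ := S.int_Δy_sq t ht
  have hvar : ∫ ω, S.Δy t ω ^ 2 ∂S.μ ≤ S.σ ^ 2 := S.hA2y_var t ht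
  simp_rw [S.sq_gty_eq]
  have hsum : Integrable (fun ω => S.gy t ω ^ 2 + 2 * (S.gy t ω * S.Δy t ω)) S.μ :=
    hgy.add hcross
  rw [integral_add hsum hΔy, integral_add hgy hcross, integral_const_mul,
    S.integral_gy_mul_Δy ht]
  linarith [S.integral_sq_gy_le ht]

theorem norm_gradθ_sub_gθ_le (ht : 1 ≤ t) (ω : Ω) :
    ‖S.gradθ t ω - S.gθ t ω‖ ≤ S.L * S.βy t * |S.gty t ω| := by
  have hlip := S.hlip (S.θ t ω) (S.θ t ω) (S.y t ω) (S.y (t + 1) ω)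
  rw [S.update_y t ht, sub_self, norm_zero] at hlip
  refine le_of_pow_le_pow_left₀ two_ne_zero
    (mul_nonneg (mul_nonneg S.L_pos.le (S.βy_pos t).le) (abs_nonneg _)) ?_
  calc ‖S.gradθ t ω - S.gθ t ω‖ ^ 2 ≤ S.L ^ 2 * (0 ^ 2 + (S.βy t * S.gty t ω) ^ 2) := by
        unfold gradθ gθ; rw [S.update_y t ht]
        nlinarith [sq_nonneg (deriv (S.f (S.θ t ω)) (S.y t ω)
          - deriv (S.f (S.θ t ω)) (S.y t ω + S.βy t * S.gty t ω))]
    _ = (S.L * S.βy t * |S.gty t ω|) ^ 2 := by rw [mul_pow _ |_|, sq_abs]; ring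

theorem fullGradSq_le (ht : 1 ≤ t) (ω : Ω) :
    S.fullGradSq t ω ≤ ‖S.gθ t ω‖ ^ 2 + S.gy t ω ^ 2
      + S.L * S.βmax t * (‖S.gradθ t ω‖ ^ 2 + S.gty t ω ^ 2) := by
  have hLβ : S.L * S.βy t ≤ S.L * S.βmax t :=
    mul_le_mul_of_nonneg_left (le_max_left _ _) S.L_pos.le
  have hamgm := two_mul_le_add_sq ‖S.gradθ t ω‖ |S.gty t ω|
  rw [sq_abs] at hamgm
  have hLβ₀ : 0 ≤ S.L * S.βy t := mul_nonneg S.L_pos.le (S.βy_pos t).le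
  have hgrad : ‖S.gradθ t ω‖ ^ 2 ≤ ‖S.gθ t ω‖ ^ 2
      + S.L * S.βmax t * (‖S.gradθ t ω‖ ^ 2 + S.gty t ω ^ 2) :=
    calc ‖S.gradθ t ω‖ ^ 2
        ≤ ‖S.gθ t ω‖ ^ 2 + 2 * ‖S.gradθ t ω‖ * ‖S.gradθ t ω - S.gθ t ω‖ :=
          sq_norm_le_sq_norm_add_two_mul_norm_mul_norm_sub _ _
      _ ≤ ‖S.gθ t ω‖ ^ 2 + S.L * S.βy t * (2 * ‖S.gradθ t ω‖ * |S.gty t ω|) := by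
          nlinarith [S.norm_gradθ_sub_gθ_le ht ω, norm_nonneg (S.gradθ t ω)]
      _ ≤ _ := by linarith [mul_le_mul hLβ hamgm (by positivity) (hLβ₀.trans hLβ)]
  rw [show S.fullGradSq t ω = ‖S.gradθ t ω‖ ^ 2 + S.gy t ω ^ 2 from rfl]
  linarith

end BCA

/-- **Full-gradient norm controlled by block-gradient norms.**
For every `t ≥ 1`,
`E[‖∇f̂(x_t)‖²] ≤ L²·(β_t^max)²·(M_ρ² + σ²) + L·β_t^max·(2M_ρ² + σ²)
  + E[‖g_t^θ‖² + |g_t^y|²]`. -/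
theorem BCA.full_grad_sq_bound {H : Type} [NormedAddCommGroup H]
    [InnerProductSpace ℝ H] [FiniteDimensional ℝ H]
    {Ω : Type} [MeasurableSpace Ω] (S : BCA H Ω) (t : ℕ) (ht : 1 ≤ t) :
    ∫ ω, S.fullGradSq t ω ∂S.μ
      ≤ S.L ^ 2 * (S.βmax t) ^ 2 * (S.Mρ ^ 2 + S.σ ^ 2)
        + S.L * S.βmax t * (2 * S.Mρ ^ 2 + S.σ ^ 2)
        + ∫ ω, (‖S.gθ t ω‖ ^ 2 + (S.gy t ω) ^ 2) ∂S.μ := by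
  have hLβ : 0 ≤ S.L * S.βmax t :=
    mul_nonneg S.L_pos.le ((S.βy_pos t).le.trans (le_max_left _ _))
  have hblock : Integrable (fun ω => ‖S.gθ t ω‖ ^ 2 + S.gy t ω ^ 2) S.μ :=
    (S.int_gθ_sq t ht).add (S.int_gy_sq t ht)
  have hcur : Integrable (fun ω => ‖S.gradθ t ω‖ ^ 2 + S.gty t ω ^ 2) S.μ :=
    (S.integrable_sq_norm_gradθ ht).add (S.integrable_sq_gty ht)
  calc ∫ ω, S.fullGradSq t ω ∂S.μ
      ≤ ∫ ω, (‖S.gθ t ω‖ ^ 2 + S.gy t ω ^ 2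
          + S.L * S.βmax t * (‖S.gradθ t ω‖ ^ 2 + S.gty t ω ^ 2)) ∂S.μ :=
        integral_mono (S.int_fullgrad_sq t ht) (hblock.add (hcur.const_mul _))
          (S.fullGradSq_le ht)
    _ = ∫ ω, (‖S.gθ t ω‖ ^ 2 + S.gy t ω ^ 2) ∂S.μ + S.L * S.βmax t
          * (∫ ω, ‖S.gradθ t ω‖ ^ 2 ∂S.μ + ∫ ω, S.gty t ω ^ 2 ∂S.μ) := by
        rw [integral_add hblock (hcur.const_mul _), integral_const_mul,
          integral_add (S.integrable_sq_norm_gradθ ht) (S.integrable_sq_gty ht)]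
    _ ≤ ∫ ω, (‖S.gθ t ω‖ ^ 2 + S.gy t ω ^ 2) ∂S.μ
          + S.L * S.βmax t * (2 * S.Mρ ^ 2 + S.σ ^ 2) := by
        gcongr _ + _ * ?_
        linarith [S.integral_sq_norm_gradθ_le ht, S.integral_sq_gty_le ht]
    _ ≤ _ := by
        have : 0 ≤ S.L ^ 2 * S.βmax t ^ 2 * (S.Mρ ^ 2 + S.σ ^ 2) := by positivity
        linarith
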